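/- arXiv:2105.12174 — 2 statements merged into one kernel-verified Lean document; each statement's English description precedes it below -/
import Mathlib

section
/- Let H, h > 0, and for α > 0 define K_α(x) = (1/(√(2π)·α))·exp(-x²/(2α²)). Then for any z_j, z_{j'}, η, y ∈ ℝ, ∫_ℝ K_H((y+y')/2 - (z_j+z_{j'})/2)·K_h((y-y') - (z_j-z_{j'}))·exp(-(y'-η)²/(2hH)) dy' = (1/(√(2π)(H+h/2)))·exp(-(z_{j'}-η)²/(2(H+h/2)²) - (y - z_j + (z_{j'}-η)(H-h/2)/(H+h/2))²/(2Hh)). -/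
/-! The three exponents are quadratic in `y'` with total leading coefficient
`-(h + 2H)² / (8H²h²)`; completing the square leaves a Gaussian in `y'`, whose integral
`√(8πH²h²) / (h + 2H)` turns the product of the two normalisations into that of `K_{H + h/2}`. -/

open MeasureTheory Real

noncomputable def K (α x : ℝ) : ℝ :=
  (1 / (Real.sqrt (2 * π) * α)) * Real.exp (-x ^ 2 / (2 * α ^ 2))

theorem integral_exp_neg_mul_sq_sub (p μ : ℝ) :
    ∫ x : ℝ, exp (-p * (x - μ) ^ 2) = √(π / p) :=
  (integral_sub_right_eq_self (fun x => exp (-p * x ^ 2)) μ).trans (integral_gaussian p)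

theorem K_mul_K (a b x u : ℝ) :
    K a x * K b u = 1 / (2 * π * a * b) * exp (-x ^ 2 / (2 * a ^ 2) + -u ^ 2 / (2 * b ^ 2)) := by
  rw [K, K, exp_add, show 2 * π * a * b = √(2 * π) * √(2 * π) * a * b by
    rw [mul_self_sqrt (by positivity)]]
  ring

theorem kernel_exponent_complete_square {H h : ℝ} (hH : H ≠ 0) (hh : h ≠ 0)
    (hHh : h + 2 * H ≠ 0) (zj zj' η y y' : ℝ) :
    -((y + y') / 2 - (zj + zj') / 2) ^ 2 / (2 * H ^ 2)
        + -((y - y') - (zj - zj')) ^ 2 / (2 * h ^ 2) + -(y' - η) ^ 2 / (2 * h * H) =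
      (-(zj' - η) ^ 2 / (2 * (H + h / 2) ^ 2)
          - (y - zj + (zj' - η) * (H - h / 2) / (H + h / 2)) ^ 2 / (2 * H * h))
        + -((h + 2 * H) ^ 2 / (8 * H ^ 2 * h ^ 2))
          * (y' - (zj' + ((y - zj) * (4 * H ^ 2 - h ^ 2) + 4 * (η - zj') * H * h)
            / (h + 2 * H) ^ 2)) ^ 2 := by
  rw [show H + h / 2 = (h + 2 * H) / 2 by ring]
  field_simp
  ring

theorem gaussian_normalization_mul_sqrt {H h : ℝ} (hH : 0 < H) (hh : 0 < h) :
    1 / (2 * π * H * h) * √(π / ((h + 2 * H) ^ 2 / (8 * H ^ 2 * h ^ 2))) =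
      1 / (√(2 * π) * (H + h / 2)) := by
  have h2π : √(2 * π) ^ 2 = 2 * π := sq_sqrt (by positivity)
  have hsq : π / ((h + 2 * H) ^ 2 / (8 * H ^ 2 * h ^ 2)) =
      (2 * √(2 * π) * H * h / (h + 2 * H)) ^ 2 := by
    rw [div_pow, mul_pow, mul_pow, mul_pow, h2π]
    field_simp
    ring
  have : 0 < √(2 * π) := sqrt_pos.mpr (by positivity)
  rw [hsq, sqrt_sq (by positivity), div_mul_div_comm, div_eq_div_iff (by positivity) (by positivity)]
  linear_combination (2 * H * h * (H + h / 2)) * h2π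

theorem gaussian_kernel_identity (H h : ℝ) (hH : 0 < H) (hh : 0 < h)
    (zj zj' η y : ℝ) :
    (∫ y' : ℝ,
        K H ((y + y') / 2 - (zj + zj') / 2) * K h ((y - y') - (zj - zj')) *
          Real.exp (-(y' - η) ^ 2 / (2 * h * H))) =
      (1 / (Real.sqrt (2 * π) * (H + h / 2))) *
        Real.exp (-(zj' - η) ^ 2 / (2 * (H + h / 2) ^ 2)
          - (y - zj + (zj' - η) * (H - h / 2) / (H + h / 2)) ^ 2 / (2 * H * h)) := by
  simp_rw [K_mul_K, mul_assoc _ (exp _), ← exp_add,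
    kernel_exponent_complete_square hH.ne' hh.ne' (by positivity : h + 2 * H ≠ 0), exp_add]
  rw [integral_const_mul, integral_const_mul, integral_exp_neg_mul_sq_sub,
    ← gaussian_normalization_mul_sqrt hH hh]
  ring
end

section
/- Let H > h/2 > 0, C > 0, ρ ∈ ℝ \ {0}, z ∈ ℝ, and define the kernel 𝕂(y,y') = C·ρ²·K_H(z - (y+y')/2)·K_h(y'-y), where K_α(x) = (1/(√(2π)α))·exp(-x²/(2α²)). Then the function V_0(y) = exp(-(y-z)²/(2Hh)) is an eigenfunction of the integral operator φ ↦ ∫_ℝ 𝕂(·,y')φ(y') dy' on L²(ℝ), with eigenvalue Λ_0 = Cρ²/(√(2π)(H+h/2)). -/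
/-!
In the variable `y'` the integrand is a product of three Gaussians, hence a single Gaussian:
completing the square, the exponents add up to `-(y - z)² / (2Hh) - b (y' - m)²` with
`b = ((2H + h) / (2Hh))² / 2`. The factor `exp (-(y - z)² / (2Hh))` is `V₀ y`, and the Gaussian
integral `∫ exp (-b (y' - m)²) = √(π / b) = √(2π) · 2Hh / (2H + h)` combines with the
normalisations `1 / (2π H h)` of the two kernels into the eigenvalue.
-/

open MeasureTheory Real

noncomputable def completedSquareRate (H h : ℝ) : ℝ :=
  ((2 * H + h) / (2 * H * h)) ^ 2 / 2

noncomputable def completedSquareCenter (H h z y : ℝ) : ℝ :=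
  z + (y - z) * (2 * H - h) / (2 * H + h)

lemma integral_exp_neg_mul_sub_sq (b m : ℝ) :
    ∫ x : ℝ, exp (-b * (x - m) ^ 2) = √(π / b) :=
  (integral_sub_right_eq_self (fun x => exp (-b * x ^ 2)) m).trans (integral_gaussian b)

lemma exponent_eq_completedSquare {H h : ℝ} (hH : H ≠ 0) (hh : h ≠ 0) (hHh : 2 * H + h ≠ 0)
    (z y y' : ℝ) :
    -(z - (y + y') / 2) ^ 2 / (2 * H ^ 2) + -(y' - y) ^ 2 / (2 * h ^ 2) +
        -(y' - z) ^ 2 / (2 * H * h) =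
      -(y - z) ^ 2 / (2 * H * h) +
        -completedSquareRate H h * (y' - completedSquareCenter H h z y) ^ 2 := by
  unfold completedSquareRate completedSquareCenter
  field_simp
  ring

lemma K_mul_K_mul_exp_eq {H h : ℝ} (hH : H ≠ 0) (hh : h ≠ 0) (hHh : 2 * H + h ≠ 0)
    (z y y' : ℝ) :
    K H (z - (y + y') / 2) * K h (y' - y) * exp (-(y' - z) ^ 2 / (2 * H * h)) =
      1 / (√(2 * π) * H) * (1 / (√(2 * π) * h)) * exp (-(y - z) ^ 2 / (2 * H * h)) *
        exp (-completedSquareRate H h * (y' - completedSquareCenter H h z y) ^ 2) := by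
  have hexp := congrArg exp (exponent_eq_completedSquare hH hh hHh z y y')
  simp only [exp_add] at hexp
  unfold K
  linear_combination 1 / (√(2 * π) * H) * (1 / (√(2 * π) * h)) * hexp

lemma sqrt_pi_div_completedSquareRate {H h : ℝ} (hH : 0 < H) (hh : 0 < h) :
    √(π / completedSquareRate H h) = √(2 * π) * (2 * H * h / (2 * H + h)) := by
  have hsq : π / completedSquareRate H h = (√(2 * π) * (2 * H * h / (2 * H + h))) ^ 2 := by
    rw [mul_pow, sq_sqrt (by positivity), completedSquareRate]
    field_simp
  rw [hsq, sqrt_sq (by positivity)]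

lemma integral_K_mul_K_mul_exp {H h : ℝ} (hH : 0 < H) (hh : 0 < h) (z y : ℝ) :
    ∫ y' : ℝ, K H (z - (y + y') / 2) * K h (y' - y) * exp (-(y' - z) ^ 2 / (2 * H * h)) =
      1 / (√(2 * π) * (H + h / 2)) * exp (-(y - z) ^ 2 / (2 * H * h)) := by
  have hHh : 0 < 2 * H + h := by positivity
  simp_rw [K_mul_K_mul_exp_eq hH.ne' hh.ne' hHh.ne' z y]
  rw [integral_const_mul, integral_exp_neg_mul_sub_sq, sqrt_pi_div_completedSquareRate hH hh]
  field_simp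

theorem leading_eigenfunction_general (H h C ρ z : ℝ) (hh : 0 < h) (hH : h / 2 < H) :
    ∀ y : ℝ,
      (∫ y' : ℝ,
          C * ρ ^ 2 * K H (z - (y + y') / 2) * K h (y' - y) *
            Real.exp (-(y' - z) ^ 2 / (2 * H * h))) =
        (C * ρ ^ 2 / (Real.sqrt (2 * π) * (H + h / 2))) *
          Real.exp (-(y - z) ^ 2 / (2 * H * h)) := by
  intro y
  have hH0 : 0 < H := by linarith
  simp_rw [mul_assoc (C * ρ ^ 2)]
  rw [integral_const_mul, integral_K_mul_K_mul_exp hH0 hh z y]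
  ring

theorem leading_eigenfunction (H h C ρ z : ℝ) (hh : 0 < h) (hH : h / 2 < H)
    (hC : 0 < C) (hρ : ρ ≠ 0) :
    ∀ y : ℝ,
      (∫ y' : ℝ,
          C * ρ ^ 2 * K H (z - (y + y') / 2) * K h (y' - y) *
            Real.exp (-(y' - z) ^ 2 / (2 * H * h))) =
        (C * ρ ^ 2 / (Real.sqrt (2 * π) * (H + h / 2))) *
          Real.exp (-(y - z) ^ 2 / (2 * H * h)) :=
  leading_eigenfunction_general H h C ρ z hh hH
end
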